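/- arXiv:1907.00956 — 2 statements merged into one kernel-verified Lean document; each statement's English description precedes it below -/
import Mathlib

section
/- In the simulation of an event order S on the graph environment G, once an agent becomes slow it is forever unable to move and is never deleted by S. -/
/-!
Model of Amir–Bruckstein "Fast Uniform Dispersion of a Crash-prone Swarm".

Agents are indexed by a type `A` (usually `ℕ`, agent `i` standing for `A_{i+1}`).
An execution is driven by an `EventOrder`: a sequence of events, each being the
activation or the deletion of a specified agent, at strictly increasing real times.
`cfg k` is the configuration before the `k`-th event.
-/

inductive AgentState (V : Type) where
  | outside : AgentState V
  | mobile (v : V) : AgentState V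
  | settled (v : V) (mark : Option V) : AgentState V
  | deleted : AgentState V

/-- The vertex occupied by an agent in a given state, if any. -/
def AgentState.pos {V : Type} : AgentState V → Option V
  | .outside => none
  | .mobile v => some v
  | .settled v _ => some v
  | .deleted => none

/-- A configuration: the state of each agent. -/
abbrev Config (A V : Type) := A → AgentState V

/-- Some settled agent occupies `v`. -/
def settledAt {A V : Type} (c : Config A V) (v : V) : Prop :=
  ∃ i m, c i = AgentState.settled v m

/-- Some mobile agent occupies `v`. -/
def mobileAt {A V : Type} (c : Config A V) (v : V) : Prop :=
  ∃ i, c i = AgentState.mobile v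

/-- The vertex `v` is empty. -/
def emptyAt {A V : Type} (c : Config A V) (v : V) : Prop :=
  ¬ settledAt c v ∧ ¬ mobileAt c v

/-- Vertex `u` contains exactly one agent: a settled agent marking `v`. -/
def soleSettledMarking {A V : Type} (c : Config A V) (u v : V) : Prop :=
  (∃ i, c i = AgentState.settled u (some v)) ∧ ¬ mobileAt c u

/-- A mobile agent at `v` has some vertex it could move to, per the local rule. -/
def canMoveFrom {A V : Type} (G : SimpleGraph V) (c : Config A V) (v : V) : Prop :=
  ∃ u, G.Adj v u ∧ (soleSettledMarking c u v ∨ emptyAt c u)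

/-- An outside agent `i` may enter the source `s`: all lower-indexed agents have
entered or been deleted, and `s` holds no mobile agent. -/
def canEnter {V : Type} (c : Config ℕ V) (s : V) (i : ℕ) : Prop :=
  (∀ j < i, c j ≠ AgentState.outside) ∧ ¬ mobileAt c s

/-- Each vertex holds at most one settled and at most one mobile agent. -/
def Capacity {A V : Type} (c : Config A V) : Prop :=
  (∀ v (i j : A) mi mj, c i = AgentState.settled v mi → c j = AgentState.settled v mj → i = j) ∧
  (∀ v (i j : A), c i = AgentState.mobile v → c j = AgentState.mobile v → i = j)

/-- An event: at `time`, the agent `agent` is activated (`isDel = false`) or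
activated-and-deleted (`isDel = true`). -/
structure Event where
  time : ℝ
  agent : ℕ
  isDel : Bool

/-- An event order: events at strictly increasing times, tending to infinity. -/
structure EventOrder where
  ev : ℕ → Event
  strict : StrictMono fun k => (ev k).time
  unbounded : Filter.Tendsto (fun k => (ev k).time) Filter.atTop Filter.atTop

/-- The legal outcomes `next` for the state of agent `i` when it is activated (and
not deleted) in configuration `c`, on environment `G` with source `s`.  This is
Algorithm 1 together with the entrance rule. -/
def ActOK {V : Type} (G : SimpleGraph V) (s : V) (c : Config ℕ V) (i : ℕ)
    (next : AgentState V) : Prop :=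
  match c i with
  | AgentState.outside =>
      (canEnter c s i ∧ emptyAt c s ∧ next = AgentState.settled s none) ∨
      (canEnter c s i ∧ ¬ emptyAt c s ∧ next = AgentState.mobile s) ∨
      (¬ canEnter c s i ∧ next = AgentState.outside)
  | AgentState.mobile v =>
      (∃ u, G.Adj v u ∧ soleSettledMarking c u v ∧ next = AgentState.mobile u) ∨
      ((¬ ∃ u, G.Adj v u ∧ soleSettledMarking c u v) ∧
        ∃ u, G.Adj v u ∧ emptyAt c u ∧ next = AgentState.settled u (some v)) ∨
      (¬ canMoveFrom G c v ∧ next = AgentState.mobile v)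
  | AgentState.settled v m => next = AgentState.settled v m
  | AgentState.deleted => next = AgentState.deleted

/-- Agent `i` attempts to move when activated in configuration `c`. -/
def AttemptsMove {V : Type} (G : SimpleGraph V) (s : V) (c : Config ℕ V) (i : ℕ) : Prop :=
  match c i with
  | AgentState.outside => canEnter c s i
  | AgentState.mobile v => canMoveFrom G c v
  | AgentState.settled _ _ => False
  | AgentState.deleted => False

/-- A simulation of an event order on the environment `G` with source `s`.
Deletions may occur at any scheduled deletion event (as is allowed when an event
order is simulated on an environment other than the one it arose from). -/
structure Exec (V : Type) (G : SimpleGraph V) (s : V) where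
  S : EventOrder
  cfg : ℕ → Config ℕ V
  init : ∀ i, cfg 0 i = AgentState.outside
  cap : ∀ k, Capacity (cfg k)
  frozen : ∀ k j, j ≠ (S.ev k).agent → cfg (k + 1) j = cfg k j
  act : ∀ k, (S.ev k).isDel = false →
    ActOK G s (cfg k) (S.ev k).agent (cfg (k + 1) (S.ev k).agent)
  del : ∀ k, (S.ev k).isDel = true → cfg (k + 1) (S.ev k).agent = AgentState.deleted

/-- An execution that could arise on the environment `G` itself: agents are
deleted only when activated and attempting to move. -/
structure ExecG (V : Type) (G : SimpleGraph V) (s : V) extends Exec V G s where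
  delLegal : ∀ k, (S.ev k).isDel = true → AttemptsMove G s (cfg k) (S.ev k).agent

/-- Agent `i` performs a successful move at step `k` (entering the source counts). -/
def movedAt {V : Type} {G : SimpleGraph V} {s : V} (E : Exec V G s) (i k : ℕ) : Prop :=
  ∃ v : V, (E.cfg (k + 1) i).pos = some v ∧ (E.cfg k i).pos ≠ some v

/-- The depth of agent `i` at step `k`: the number of successful moves made before `k`. -/
noncomputable def depth {V : Type} {G : SimpleGraph V} {s : V} (E : Exec V G s)
    (i k : ℕ) : ℕ :=
  Set.ncard {j | j < k ∧ movedAt E i j}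

/-- Slow vertices, relative to a parent function `par` describing the tree.
A vertex becomes slow when a mobile agent on it is activated and finds no vertex
it can move to, while all its descendants in the tree are already slow;
slowness persists forever. -/
inductive SlowVtx {V : Type} (G : SimpleGraph V) (s : V) (par : V → Option V)
    (E : Exec V G s) : ℕ → V → Prop
  | trigger (k : ℕ) (v : V) :
      (E.S.ev k).isDel = false →
      E.cfg k ((E.S.ev k).agent) = AgentState.mobile v →
      ¬ canMoveFrom G (E.cfg k) v →
      (∀ u, par u = some v → SlowVtx G s par E k u) →
      SlowVtx G s par E (k + 1) v
  | persist (k : ℕ) (v : V) : SlowVtx G s par E k v → SlowVtx G s par E (k + 1) v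

/-- Iterated parent map. -/
def parIter {V : Type} (par : V → Option V) : ℕ → V → Option V
  | 0, v => some v
  | m + 1, v => (par v).bind (parIter par m)

/-- A spanning tree of `G` rooted at `s`, given by a parent function. -/
structure SpanningTreeOn (V : Type) (G : SimpleGraph V) (s : V) where
  par : V → Option V
  root_iff : ∀ v, par v = none ↔ v = s
  adj : ∀ v u, par v = some u → G.Adj v u
  reach : ∀ v, ∃ m, parIter par m v = some s

/-- The marks of settled agents follow the tree `T` (so `G(t) ⊆ T` at all times). -/
def MarksFollow {V : Type} {G : SimpleGraph V} {s : V} (E : Exec V G s)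
    (T : SpanningTreeOn V G s) : Prop :=
  ∀ k i v m, E.cfg k i = AgentState.settled v m → T.par v = m

/-- Agents traverse only edges of the tree `T`, moving from parent to child
(entering the environment only at the root `s`). -/
def MovesOnTree {V : Type} {G : SimpleGraph V} {s : V} (E : Exec V G s)
    (T : SpanningTreeOn V G s) : Prop :=
  ∀ k i u, (E.cfg k i).pos ≠ some u → (E.cfg (k + 1) i).pos = some u →
    (u = s ∧ E.cfg k i = AgentState.outside) ∨
    (∃ v, (E.cfg k i).pos = some v ∧ T.par u = some v)

/-- Agent `i` is slow at step `k` (it occupies a slow vertex). -/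
def AgentSlow {V : Type} {G : SimpleGraph V} {s : V} (par : V → Option V)
    (E : Exec V G s) (k i : ℕ) : Prop :=
  ∃ v, (E.cfg k i).pos = some v ∧ SlowVtx G s par E k v

/-- Agent `i` is settled at step `k`. -/
def AgentSettled {V : Type} {G : SimpleGraph V} {s : V} (E : Exec V G s) (k i : ℕ) : Prop :=
  ∃ v m, E.cfg k i = AgentState.settled v m

/-- Parent function of the path graph `P(n)`: `v_0` is the root and the parent of
`v_{i+1}` is `v_i`. -/
def pathPar (n : ℕ) : Fin n → Option (Fin n) := fun v =>
  if _ : (v : ℕ) = 0 then none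
  else some ⟨(v : ℕ) - 1, lt_of_le_of_lt (Nat.sub_le _ _) v.isLt⟩

/-- The one-sided infinite path `P(∞)` on `ℕ`. -/
def pathInf : SimpleGraph ℕ := SimpleGraph.fromRel (fun a b => b = a + 1)

/-- Parent function of `P(∞)`, rooted at `0`. -/
def pathInfPar : ℕ → Option ℕ := fun v => if v = 0 then none else some (v - 1)

/-- The meaningful event times of an event order: `idx m` is the index of the
event `t_m`, the first event after `t_{m-1}` at which one of the agents
`A_1, …, A_{m+1}` (indices `0, …, m`) acts. -/
structure MeaningfulTimes (S : EventOrder) where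
  idx : ℕ → ℕ
  mono : StrictMono idx
  agent_le : ∀ m, (S.ev (idx m)).agent ≤ m
  first0 : ∀ k < idx 0, (S.ev k).agent ≠ 0
  least : ∀ m k, idx m < k → k < idx (m + 1) → ¬ ((S.ev k).agent ≤ m + 1)

/-- The directed graph of settled agents and their marks is a tree rooted at `s`:
`s` is settled; an agent has no mark exactly when it sits at `s`; marks point along
edges of `G` to settled vertices; and every settled vertex reaches `s` by a chain
of marks. -/
def IsMarkTree {V : Type} (G : SimpleGraph V) (s : V) (c : Config ℕ V) : Prop :=
  settledAt c s ∧
  (∀ i v m, c i = AgentState.settled v m → (m = none ↔ v = s)) ∧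
  (∀ i v u, c i = AgentState.settled v (some u) → G.Adj v u ∧ settledAt c u) ∧
  (∀ v, settledAt c v →
    ∃ (m : ℕ) (f : ℕ → V), f 0 = v ∧ f m = s ∧
      ∀ j < m, ∃ i, c i = AgentState.settled (f j) (some (f (j + 1))))

/-- The first step (as an extended natural) at which a predicate holds. -/
noncomputable def firstStep (P : ℕ → Prop) : ℕ∞ :=
  sInf {m : ℕ∞ | ∃ k : ℕ, m = (k : ℕ∞) ∧ P k}

/-- The number of events of `S` occurring before (real) time `t`; since event times
are strictly increasing, the configuration at time `t` is `cfg (stepsBefore S t)`. -/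
noncomputable def stepsBefore (S : EventOrder) (t : ℝ) : ℕ :=
  Set.ncard {k | (S.ev k).time < t}

/-- Statement (a): every non-deleted agent whose copy in `G` is neither slow nor
settled has depth in `G` at least its depth in `P(n)`. -/
def StmtA {V : Type} {G : SimpleGraph V} {s : V} (n : ℕ) (hn : 0 < n)
    (EG : Exec V G s) (TG : SpanningTreeOn V G s)
    (EP : Exec (Fin n) (SimpleGraph.pathGraph n) ⟨0, hn⟩) (k : ℕ) : Prop :=
  ∀ i, EG.cfg k i ≠ AgentState.deleted →
    ¬ (AgentSlow TG.par EG k i ∨ AgentSettled EG k i) →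
    depth EP i k ≤ depth EG i k

/-- Statement (b): for every non-deleted agent, if its copy in `P(n)` is slow or
settled then its copy in `G` is slow or settled, and its depth in `G` is at most
its depth in `P(n)`. -/
def StmtB {V : Type} {G : SimpleGraph V} {s : V} (n : ℕ) (hn : 0 < n)
    (EG : Exec V G s) (TG : SpanningTreeOn V G s)
    (EP : Exec (Fin n) (SimpleGraph.pathGraph n) ⟨0, hn⟩) (k : ℕ) : Prop :=
  ∀ i, EG.cfg k i ≠ AgentState.deleted →
    (AgentSlow (pathPar n) EP k i ∨ AgentSettled EP k i) →
    ((AgentSlow TG.par EG k i ∨ AgentSettled EG k i) ∧ depth EG i k ≤ depth EP i k)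

/-
Two invariants of executions on `G`: settled agents are never moved or deleted,
and every mobile agent shares its vertex with a settled agent. Now suppose `v` is slow at
step `k`, with its mobile agent stuck. At step `k + 1` no neighbour of `v` can have become
empty (occupied vertices stay settled) or newly settled (that would have needed an empty
neighbour of `v` at step `k`), and a neighbour whose settled agent marks `v` is a child of `v`
in the tree, hence slow and still occupied by its own stuck mobile agent. So the agent at `v`
stays stuck, and since slowness persists, it stays stuck forever.
-/

theorem SlowVtx.mono {V : Type} {G : SimpleGraph V} {s : V} {par : V → Option V}
    {E : Exec V G s} {k k' : ℕ} {v : V} (h : SlowVtx G s par E k v) (hk : k ≤ k') :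
    SlowVtx G s par E k' v := by
  induction k', hk using Nat.le_induction with
  | base => exact h
  | succ k' _ ih => exact .persist _ _ ih

theorem SlowVtx.of_par_eq_some {V : Type} {G : SimpleGraph V} {s : V} {par : V → Option V}
    {E : Exec V G s} {k : ℕ} {u v : V} (h : SlowVtx G s par E k v) (hu : par u = some v) :
    SlowVtx G s par E k u := by
  induction h with
  | trigger k v _ _ _ hchildren => exact .persist _ _ (hchildren u hu)
  | persist k v _ ih => exact .persist _ _ (ih hu)

def stuckAt {A V : Type} (G : SimpleGraph V) (c : Config A V) (v : V) : Prop :=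
  mobileAt c v ∧ ¬ canMoveFrom G c v

namespace Exec

variable {V : Type} {G : SimpleGraph V} {s : V} (E : Exec V G s)

theorem emptyAt_of_cfg_succ_eq_settled {k i : ℕ} {u : V} {m : Option V}
    (h : E.cfg (k + 1) i = .settled u m) (hne : E.cfg k i ≠ .settled u m) :
    emptyAt (E.cfg k) u := by
  have hi : i = (E.S.ev k).agent := by
    by_contra hi
    exact hne (E.frozen k i hi ▸ h)
  subst hi
  cases hd : (E.S.ev k).isDel
  · have hact := E.act k hd
    rw [h] at hact
    rcases hc : E.cfg k (E.S.ev k).agent with _ | w | ⟨w, m'⟩ | _ <;>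
      simp only [ActOK, hc] at hact
    · rcases hact with ⟨-, hempty, ⟨⟩⟩ | ⟨-, -, ⟨⟩⟩ | ⟨-, ⟨⟩⟩
      exact hempty
    · rcases hact with ⟨_, -, -, ⟨⟩⟩ | ⟨-, _, -, hempty, ⟨⟩⟩ | ⟨-, ⟨⟩⟩
      exact hempty
    · cases hact
      exact absurd hc hne
    · cases hact
  · simp [E.del k hd] at h

end Exec

namespace ExecG

variable {V : Type} {G : SimpleGraph V} {s : V} (E : ExecG V G s)

theorem cfg_succ_eq_settled {k i : ℕ} {v : V} {m : Option V}
    (h : E.cfg k i = .settled v m) : E.cfg (k + 1) i = .settled v m := by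
  by_cases hi : i = (E.S.ev k).agent
  · subst hi
    cases hd : (E.S.ev k).isDel
    · simpa [ActOK, h] using E.act k hd
    · simpa [AttemptsMove, h] using E.delLegal k hd
  · rw [E.frozen k i hi, h]

theorem settledAt_succ {k : ℕ} {u : V} (h : settledAt (E.cfg k) u) :
    settledAt (E.cfg (k + 1)) u :=
  let ⟨i, m, hi⟩ := h
  ⟨i, m, E.cfg_succ_eq_settled hi⟩

theorem cfg_succ_eq_mobile {k i : ℕ} {v : V} (h : E.cfg k i = .mobile v)
    (hstuck : ¬ canMoveFrom G (E.cfg k) v) : E.cfg (k + 1) i = .mobile v := by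
  by_cases hi : i = (E.S.ev k).agent
  · subst hi
    cases hd : (E.S.ev k).isDel
    · have hact := E.act k hd
      simp only [ActOK, h] at hact
      rcases hact with ⟨u, hadj, hsole, -⟩ | ⟨-, u, hadj, hempty, -⟩ | ⟨-, hstay⟩
      · exact absurd ⟨u, hadj, .inl hsole⟩ hstuck
      · exact absurd ⟨u, hadj, .inr hempty⟩ hstuck
      · exact hstay
    · exact absurd (by simpa [AttemptsMove, h] using E.delLegal k hd) hstuck
  · rw [E.frozen k i hi, h]

theorem settledAt_of_mobileAt {k : ℕ} {u : V} (h : mobileAt (E.cfg k) u) :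
    settledAt (E.cfg k) u := by
  induction k generalizing u with
  | zero =>
    obtain ⟨i, hi⟩ := h
    simp [E.init i] at hi
  | succ k ih =>
    obtain ⟨i, hi⟩ := h
    refine E.settledAt_succ ?_
    by_cases hia : i = (E.S.ev k).agent
    · subst hia
      cases hd : (E.S.ev k).isDel
      · have hact := E.act k hd
        rw [hi] at hact
        rcases hc : E.cfg k (E.S.ev k).agent with _ | w | ⟨w, m⟩ | _ <;>
          simp only [ActOK, hc] at hact
        · rcases hact with ⟨-, -, ⟨⟩⟩ | ⟨⟨-, hnomobile⟩, hnonempty, ⟨⟩⟩ | ⟨-, ⟨⟩⟩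
          exact not_not.mp fun hnotsettled => hnonempty ⟨hnotsettled, hnomobile⟩
        · rcases hact with ⟨_, -, ⟨⟨j, hj⟩, -⟩, ⟨⟩⟩ | ⟨-, _, -, -, ⟨⟩⟩ | ⟨-, ⟨⟩⟩
          · exact ⟨j, _, hj⟩
          · exact ih ⟨_, hc⟩
        · cases hact
        · cases hact
      · simp [E.del k hd] at hi
    · exact ih ⟨i, E.frozen k i hia ▸ hi⟩

theorem emptyAt_iff_not_settledAt {k : ℕ} {u : V} :
    emptyAt (E.cfg k) u ↔ ¬ settledAt (E.cfg k) u :=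
  ⟨And.left, fun h => ⟨h, fun hmobile => h (E.settledAt_of_mobileAt hmobile)⟩⟩

theorem stuckAt_succ {k : ℕ} {v : V} (h : stuckAt G (E.cfg k) v)
    (hmarking : ∀ u i, E.cfg k i = .settled u (some v) → stuckAt G (E.cfg k) u) :
    stuckAt G (E.cfg (k + 1)) v := by
  have mobileAt_succ {w : V} (hw : stuckAt G (E.cfg k) w) : mobileAt (E.cfg (k + 1)) w :=
    let ⟨j, hj⟩ := hw.1
    ⟨j, E.cfg_succ_eq_mobile hj hw.2⟩
  refine ⟨mobileAt_succ h, ?_⟩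
  rintro ⟨u, hadj, ⟨⟨i, hi⟩, hnomobile⟩ | ⟨hnotsettled, -⟩⟩
  · by_cases hold : E.cfg k i = .settled u (some v)
    · exact hnomobile (mobileAt_succ (hmarking u i hold))
    · exact h.2 ⟨u, hadj, .inr (E.emptyAt_of_cfg_succ_eq_settled hi hold)⟩
  · have hoccupied : settledAt (E.cfg k) u :=
      not_not.mp fun hu => h.2 ⟨u, hadj, .inr (E.emptyAt_iff_not_settledAt.2 hu)⟩
    exact hnotsettled (E.settledAt_succ hoccupied)

theorem stuckAt_of_slowVtx {T : SpanningTreeOn V G s} (hmark : MarksFollow E.toExec T)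
    {k : ℕ} {v : V} (h : SlowVtx G s T.par E.toExec k v) : stuckAt G (E.cfg k) v := by
  induction k generalizing v with
  | zero => cases h
  | succ k ih =>
    have hmarking (hchildren : ∀ u, T.par u = some v → SlowVtx G s T.par E.toExec k u)
        (u : V) (i : ℕ) (hi : E.cfg k i = .settled u (some v)) : stuckAt G (E.cfg k) u :=
      ih (hchildren u (hmark k i u _ hi))
    cases h with
    | trigger _ _ _ hmobile hstuck hchildren =>
      exact E.stuckAt_succ ⟨⟨_, hmobile⟩, hstuck⟩ (hmarking hchildren)
    | persist _ _ hslow =>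
      exact E.stuckAt_succ (ih hslow) (hmarking fun _ hu => hslow.of_par_eq_some hu)

theorem cfg_succ_eq_of_slowVtx {T : SpanningTreeOn V G s} (hmark : MarksFollow E.toExec T)
    {k i : ℕ} {v : V} (hpos : (E.cfg k i).pos = some v) (hslow : SlowVtx G s T.par E.toExec k v) :
    E.cfg (k + 1) i = E.cfg k i := by
  rcases hc : E.cfg k i with _ | w | ⟨w, m⟩ | _ <;> rw [hc] at hpos <;> cases hpos
  · exact E.cfg_succ_eq_mobile hc (E.stuckAt_of_slowVtx hmark hslow).2
  · exact E.cfg_succ_eq_settled hc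

end ExecG

theorem stmt2_general {V : Type} (G : SimpleGraph V) (s : V)
    (EG : ExecG V G s) (TG : SpanningTreeOn V G s)
    (hmark : MarksFollow EG.toExec TG)
    (k i : ℕ) (v : V) (hpos : (EG.cfg k i).pos = some v)
    (hslow : SlowVtx G s TG.par EG.toExec k v) :
    ∀ k', k ≤ k' → EG.cfg k' i = EG.cfg k i := by
  intro k' hk'
  induction k', hk' using Nat.le_induction with
  | base => rfl
  | succ k' hk' ih =>
    rw [← ih] at hpos ⊢
    exact EG.cfg_succ_eq_of_slowVtx hmark hpos (hslow.mono hk')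

/-- In the simulation of an event order `S` on the graph
environment `G`, once an agent becomes slow (it occupies a slow vertex of the
spanning tree `T_S`), it is forever unable to move and is never deleted by `S`:
its state never changes again. -/
theorem stmt2 {V : Type} [Fintype V] (G : SimpleGraph V) (hG : G.Connected) (s : V)
    (EG : ExecG V G s) (TG : SpanningTreeOn V G s)
    (hmark : MarksFollow EG.toExec TG) (hmove : MovesOnTree EG.toExec TG)
    (k i : ℕ) (v : V) (hpos : (EG.cfg k i).pos = some v)
    (hslow : SlowVtx G s TG.par EG.toExec k v) :
    ∀ k', k ≤ k' → EG.cfg k' i = EG.cfg k i :=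
  stmt2_general G s EG TG hmark k i v hpos hslow
end

section
/- For any event order S, at every meaningful event time t_m and for every index i such that the copy of A_i in the simulation on P*(∞) has not been deleted, d(A_i^B, t_m) − i + 1 ≤ d(A_i^{P*(∞)}, t_m), where A_i^B and A_i^{P*(∞)} are the copies of A_i in the simulations on B and on P*(∞); equivalently, the index of the vertex occupied by A_i^B at time t_m is at most d(A_i^{P*(∞)}, t_m). -/
/-- State of an agent in the environment `P*(∞)` (vertices `1, 2, 3, …`, each
holding a never-activated settled dummy agent marking its predecessor): the
indexed agents never settle, so they are outside, at a vertex, or deleted. -/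
inductive PState where
  | outside : PState
  | inside (p : ℕ) : PState
  | deleted : PState

def PState.pos : PState → Option ℕ
  | .outside => none
  | .inside p => some p
  | .deleted => none

/-- Entrance rule in `P*(∞)`: an agent enters at vertex `1` when no mobile agent
is there and all lower-indexed agents have entered or been deleted. -/
def starCanEnter (c : ℕ → PState) (i : ℕ) : Prop :=
  (∀ j < i, c j ≠ PState.outside) ∧ ¬ ∃ j, c j = PState.inside 1

/-- The local rule in `P*(∞)`: since every vertex holds exactly one settled dummy
agent marking its predecessor, a mobile agent at `p` moves to `p + 1` exactly when
no mobile agent occupies `p + 1`. -/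
def StarActOK (c : ℕ → PState) (i : ℕ) (next : PState) : Prop :=
  match c i with
  | PState.outside =>
      (starCanEnter c i ∧ next = PState.inside 1) ∨
      (¬ starCanEnter c i ∧ next = PState.outside)
  | PState.inside p =>
      ((¬ ∃ j, c j = PState.inside (p + 1)) ∧ next = PState.inside (p + 1)) ∨
      ((∃ j, c j = PState.inside (p + 1)) ∧ next = PState.inside p)
  | PState.deleted => next = PState.deleted

/-- Simulation of an event order on `P*(∞)`. -/
structure ExecStar (S : EventOrder) where
  st : ℕ → ℕ → PState
  init : ∀ i, st 0 i = PState.outside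
  frozen : ∀ k j, j ≠ (S.ev k).agent → st (k + 1) j = st k j
  act : ∀ k, (S.ev k).isDel = false →
    StarActOK (st k) (S.ev k).agent (st (k + 1) (S.ev k).agent)
  del : ∀ k, (S.ev k).isDel = true → st (k + 1) (S.ev k).agent = PState.deleted

def starMovedAt {S : EventOrder} (E : ExecStar S) (i k : ℕ) : Prop :=
  ∃ p, (E.st (k + 1) i).pos = some p ∧ (E.st k i).pos ≠ some p

/-- Depth of agent `i` in `P*(∞)`: number of successful moves before step `k`. -/
noncomputable def starDepth {S : EventOrder} (E : ExecStar S) (i k : ℕ) : ℕ :=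
  Set.ncard {j | j < k ∧ starMovedAt E i j}

/-- Agent `i` has entered `P*(∞)` at or before step `k`. -/
def everEntered {S : EventOrder} (E : ExecStar S) (k i : ℕ) : Prop :=
  ∃ j ≤ k, ∃ p, E.st j i = PState.inside p

/-- Simulation of an event order on the two-sided infinite path `B` (vertices
`ℤ`, each holding a settled dummy marking its left neighbour): agent `i`
(representing `A_{i+1}`) starts as a mobile agent at vertex `-i` (the paper's
`v_{-i+1}` for the 1-indexed `A_i`); there is no entry process; an activated
agent moves one step right unless a mobile agent blocks it; agents are never
deleted — scheduled deletions are treated as ordinary activations. -/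
structure ExecB (S : EventOrder) where
  pos : ℕ → ℕ → ℤ
  init : ∀ i, pos 0 i = -(i : ℤ)
  frozen : ∀ k j, j ≠ (S.ev k).agent → pos (k + 1) j = pos k j
  step : ∀ k,
    ((¬ ∃ j, pos k j = pos k (S.ev k).agent + 1) ∧
      pos (k + 1) (S.ev k).agent = pos k (S.ev k).agent + 1) ∨
    ((∃ j, pos k j = pos k (S.ev k).agent + 1) ∧
      pos (k + 1) (S.ev k).agent = pos k (S.ev k).agent)

/-- Depth of agent `i` in `B`: number of successful moves before step `k`. -/
noncomputable def depthB {S : EventOrder} (E : ExecB S) (i k : ℕ) : ℕ :=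
  Set.ncard {j | j < k ∧ E.pos (j + 1) i ≠ E.pos j i}

/-!
Agents of `B` start in decreasing order of index and only ever move onto a free vertex, so
that order is strict forever. In `P*(∞)` the depth of an agent is the index of its vertex (`0`
while outside), and an activated agent there either advances by one vertex or is blocked by a
lower-indexed, non-deleted agent at most one vertex ahead of it. By induction on the events that
agent is at most as far right in `B` as in `P*(∞)`, and in `B` it stays strictly ahead of the
blocked agent, which therefore cannot get past its own `P*(∞)` index either.
-/

theorem Set.ncard_setOf_lt_and_eq_count (P : ℕ → Prop) [DecidablePred P] (k : ℕ) :
    {j | j < k ∧ P j}.ncard = Nat.count P k := by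
  rw [Nat.count_eq_card_filter_range, ← Set.ncard_coe_finset]
  congr 1
  ext j
  simp

namespace ExecB

variable {S : EventOrder} (EB : ExecB S)

theorem pos_succ_eq_or (k i : ℕ) :
    EB.pos (k + 1) i = EB.pos k i ∨ EB.pos (k + 1) i = EB.pos k i + 1 := by
  by_cases h : i = (S.ev k).agent
  · subst h
    rcases EB.step k with ⟨_, h⟩ | ⟨_, h⟩
    exacts [Or.inr h, Or.inl h]
  · exact Or.inl (EB.frozen k i h)

theorem depthB_eq (i k : ℕ) : (depthB EB i k : ℤ) = EB.pos k i + i := by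
  classical
  rw [depthB, Set.ncard_setOf_lt_and_eq_count]
  induction k with
  | zero => simp [EB.init i]
  | succ k ih =>
    rw [Nat.count_succ]
    rcases EB.pos_succ_eq_or k i with h | h
    · rw [if_neg (show ¬EB.pos (k + 1) i ≠ EB.pos k i by omega)]
      simpa [h] using ih
    · rw [if_pos (show EB.pos (k + 1) i ≠ EB.pos k i by omega)]
      push_cast
      omega

theorem pos_strictAnti (k : ℕ) : StrictAnti (EB.pos k) := by
  induction k with
  | zero => intro j i hji; simp only [EB.init]; omega
  | succ k ih =>
    intro j i hji
    have hframe : ∀ x, x ≠ (S.ev k).agent → EB.pos (k + 1) x = EB.pos k x := EB.frozen k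
    rcases EB.step k with ⟨hfree, hmove⟩ | ⟨_, hstay⟩
    · have hij := ih hji
      by_cases hi : i = (S.ev k).agent
      · subst hi
        have hne : EB.pos k j ≠ EB.pos k (S.ev k).agent + 1 := fun h => hfree ⟨j, h⟩
        rw [hframe j hji.ne, hmove]
        omega
      · by_cases hj : j = (S.ev k).agent
        · subst hj
          rw [hframe i hi, hmove]
          omega
        · rw [hframe i hi, hframe j hj]
          exact hij
    · have hall : ∀ x, EB.pos (k + 1) x = EB.pos k x := fun x => by
        by_cases hx : x = (S.ev k).agent
        · subst hx; exact hstay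
        · exact hframe x hx
      rw [hall, hall]
      exact ih hji

theorem pos_succ_agent_le_of_lt (k : ℕ) {j : ℕ} (hj : j < (S.ev k).agent) {x : ℤ}
    (hx : EB.pos k j ≤ x + 1) : EB.pos (k + 1) (S.ev k).agent ≤ x := by
  have := EB.pos_strictAnti (k + 1) hj
  rw [EB.frozen k j hj.ne] at this
  omega

end ExecB

def PState.index : PState → ℕ
  | .inside p => p
  | _ => 0

theorem PState.pos_ne_some_index_add_one (s : PState) : s.pos ≠ some (s.index + 1) := by
  cases s <;> simp [PState.pos, PState.index]

namespace ExecStar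

variable {S : EventOrder} (E : ExecStar S)

theorem step_cases (k : ℕ) :
    E.st (k + 1) (S.ev k).agent = .deleted ∨
    (E.st k (S.ev k).agent = .outside ∧ starCanEnter (E.st k) (S.ev k).agent ∧
      E.st (k + 1) (S.ev k).agent = .inside 1) ∨
    (E.st k (S.ev k).agent = .outside ∧ ¬ starCanEnter (E.st k) (S.ev k).agent ∧
      E.st (k + 1) (S.ev k).agent = .outside) ∨
    (∃ p, E.st k (S.ev k).agent = .inside p ∧ (∀ j, E.st k j ≠ .inside (p + 1)) ∧
      E.st (k + 1) (S.ev k).agent = .inside (p + 1)) ∨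
    (∃ p, E.st k (S.ev k).agent = .inside p ∧ (∃ j, E.st k j = .inside (p + 1)) ∧
      E.st (k + 1) (S.ev k).agent = .inside p) := by
  cases hdel : (S.ev k).isDel
  · have hact := E.act k hdel
    cases hst : E.st k (S.ev k).agent with
    | outside =>
      rw [StarActOK, hst] at hact
      rcases hact with ⟨h1, h2⟩ | ⟨h1, h2⟩
      exacts [Or.inr (Or.inl ⟨rfl, h1, h2⟩), Or.inr (Or.inr (Or.inl ⟨rfl, h1, h2⟩))]
    | inside p =>
      rw [StarActOK, hst] at hact
      rcases hact with ⟨h1, h2⟩ | ⟨h1, h2⟩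
      · exact Or.inr (Or.inr (Or.inr (Or.inl ⟨p, rfl, not_exists.mp h1, h2⟩)))
      · exact Or.inr (Or.inr (Or.inr (Or.inr ⟨p, rfl, h1, h2⟩)))
    | deleted =>
      rw [StarActOK, hst] at hact
      exact Or.inl hact
  · exact Or.inl (E.del k hdel)

theorem inside_pos {k i p : ℕ} (h : E.st k i = .inside p) : 0 < p := by
  induction k generalizing i p with
  | zero => simp [E.init] at h
  | succ k ih =>
    by_cases hi : i = (S.ev k).agent
    · subst hi
      rcases E.step_cases k with h1 | ⟨-, -, h1⟩ | ⟨-, -, h1⟩ | ⟨q, -, -, h1⟩ | ⟨q, hq, -, h1⟩ <;>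
        simp only [h1, reduceCtorEq, PState.inside.injEq] at h
      · omega
      · omega
      · exact h ▸ ih hq
    · exact ih (E.frozen k i hi ▸ h)

theorem deleted_or_ahead_of_lt {k i j p : ℕ} (hji : j < i) (hi : E.st k i = .inside p) :
    E.st k j = .deleted ∨ ∃ q, p < q ∧ E.st k j = .inside q := by
  induction k generalizing p with
  | zero => simp [E.init] at hi
  | succ k ih =>
    by_cases hia : i = (S.ev k).agent
    · subst hia
      rw [E.frozen k j hji.ne]
      rcases E.step_cases k with h1 | ⟨-, henter, h1⟩ | ⟨-, -, h1⟩ | ⟨q, hq, hfree, h1⟩ |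
          ⟨q, hq, -, h1⟩ <;> rw [h1] at hi <;> cases hi
      · cases hj : E.st k j with
        | outside => exact absurd hj (henter.1 j hji)
        | inside q =>
          have hq1 : q ≠ 1 := fun h => henter.2 ⟨j, h ▸ hj⟩
          exact Or.inr ⟨q, by have := E.inside_pos hj; omega, rfl⟩
        | deleted => exact Or.inl rfl
      · rcases ih hq with h | ⟨r, hr, hj⟩
        · exact Or.inl h
        · have hr1 : r ≠ q + 1 := fun h => hfree j (h ▸ hj)
          exact Or.inr ⟨r, by omega, hj⟩
      · exact ih hq
    · rw [E.frozen k i hia] at hi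
      by_cases hja : j = (S.ev k).agent
      · subst hja
        have hj := ih hi
        rcases E.step_cases k with h1 | ⟨h0, -, -⟩ | ⟨h0, -, -⟩ | ⟨q, hq, -, h1⟩ | ⟨q, hq, -, h1⟩
        · exact Or.inl h1
        · simp [h0] at hj
        · simp [h0] at hj
        · simp only [hq, reduceCtorEq, PState.inside.injEq, false_or] at hj
          obtain ⟨r, hr, rfl⟩ := hj
          exact Or.inr ⟨q + 1, by omega, h1⟩
        · simp only [hq, reduceCtorEq, PState.inside.injEq, false_or] at hj
          obtain ⟨r, hr, rfl⟩ := hj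
          exact Or.inr ⟨q, hr, h1⟩
      · rw [E.frozen k j hja]
        exact ih hi

theorem lt_agent_of_inside_index_succ {k j p : ℕ} (hj : E.st k j = .inside (p + 1))
    (ha : E.st k (S.ev k).agent ≠ .deleted) (hp : (E.st k (S.ev k).agent).index = p) :
    j < (S.ev k).agent := by
  by_contra! hle
  have hne : (S.ev k).agent ≠ j := fun hc => by rw [hc, hj, PState.index] at hp; omega
  rcases E.deleted_or_ahead_of_lt (lt_of_le_of_ne hle hne) hj with h | ⟨q, hq, h⟩
  · exact ha h
  · simp only [h, PState.index] at hp
    omega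

theorem advance_or_blocked {k : ℕ} (h : E.st (k + 1) (S.ev k).agent ≠ .deleted) :
    E.st k (S.ev k).agent ≠ .deleted ∧
      (E.st (k + 1) (S.ev k).agent = .inside ((E.st k (S.ev k).agent).index + 1) ∨
        E.st (k + 1) (S.ev k).agent = E.st k (S.ev k).agent ∧
          ∃ j < (S.ev k).agent, E.st k j ≠ .deleted ∧
            (E.st k j).index ≤ (E.st k (S.ev k).agent).index + 1) := by
  rcases E.step_cases k with h1 | ⟨h0, -, h1⟩ | ⟨h0, hblocked, h1⟩ | ⟨q, hq, -, h1⟩ |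
      ⟨q, hq, ⟨j, hj⟩, h1⟩
  · exact absurd h1 h
  · exact ⟨by simp [h0], Or.inl (by simp [h0, h1, PState.index])⟩
  · refine ⟨by simp [h0], Or.inr ⟨h1.trans h0.symm, ?_⟩⟩
    simp only [starCanEnter, not_and_or, not_forall, not_not] at hblocked
    rcases hblocked with ⟨j, hj, hout⟩ | ⟨j, hj⟩
    · exact ⟨j, hj, by simp [hout], by simp [hout, h0, PState.index]⟩
    · exact ⟨j, E.lt_agent_of_inside_index_succ hj (by simp [h0]) (by simp [h0, PState.index]),
        by simp [hj], by simp [hj, h0, PState.index]⟩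
  · exact ⟨by simp [hq], Or.inl (by simp [hq, h1, PState.index])⟩
  · exact ⟨by simp [hq], Or.inr ⟨h1.trans hq.symm, j,
      E.lt_agent_of_inside_index_succ hj (by simp [hq]) (by simp [hq, PState.index]),
      by simp [hj], by simp [hj, hq, PState.index]⟩⟩

theorem starDepth_eq_index {k i : ℕ} (h : E.st k i ≠ .deleted) :
    starDepth E i k = (E.st k i).index := by
  classical
  rw [starDepth, Set.ncard_setOf_lt_and_eq_count]
  induction k with
  | zero => simp [E.init, PState.index]
  | succ k ih =>
    have not_moved (hst : E.st (k + 1) i = E.st k i) : ¬ starMovedAt E i k := by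
      rintro ⟨p, hp, hne⟩
      exact hne (hst ▸ hp)
    rw [Nat.count_succ]
    by_cases hi : i = (S.ev k).agent
    · subst hi
      obtain ⟨h0, hadv | ⟨hstay, -⟩⟩ := E.advance_or_blocked h
      · have hmoved : starMovedAt E (S.ev k).agent k :=
          ⟨_, by rw [hadv]; rfl, PState.pos_ne_some_index_add_one _⟩
        rw [if_pos hmoved, ih h0, hadv]
        rfl
      · rw [if_neg (not_moved hstay), ih h0, hstay, Nat.add_zero]
    · have hst := E.frozen k i hi
      rw [if_neg (not_moved hst), hst, ih (hst ▸ h), Nat.add_zero]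

end ExecStar

theorem ExecB.pos_le_index {S : EventOrder} (EB : ExecB S) (E : ExecStar S) {k i : ℕ}
    (h : E.st k i ≠ .deleted) : EB.pos k i ≤ (E.st k i).index := by
  induction k generalizing i with
  | zero => simp [EB.init]
  | succ k ih =>
    by_cases hi : i = (S.ev k).agent
    · subst hi
      obtain ⟨h0, hadv | ⟨hstay, j, hj, hjdel, hjindex⟩⟩ := E.advance_or_blocked h
      · have := ih h0
        rw [hadv, PState.index]
        rcases EB.pos_succ_eq_or k (S.ev k).agent with h | h <;> push_cast <;> omega
      · rw [hstay]
        refine EB.pos_succ_agent_le_of_lt k hj ?_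
        have := ih hjdel
        omega
    · rw [E.frozen k i hi] at h ⊢
      rw [EB.frozen k i hi]
      exact ih h

/-- Inequality (6) of the paper. For any event order `S`, at
every meaningful event time `t_m` and every index `i` (agent `A_{i+1}` in the
paper's 1-indexing) whose copy in `P*(∞)` has not been deleted,
`d(A_i^B, t_m) − i + 1 ≤ d(A_i^{P*(∞)}, t_m)`; equivalently, the index of the
vertex occupied by `A_i^B` at `t_m` is at most `d(A_i^{P*(∞)}, t_m)`. -/
theorem stmt11 (S : EventOrder) (EB : ExecB S) (Estar : ExecStar S)
    (M : MeaningfulTimes S) (m i : ℕ)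
    (hdel : Estar.st (M.idx m) i ≠ PState.deleted) :
    (depthB EB i (M.idx m) : ℤ) - i ≤ (starDepth Estar i (M.idx m) : ℤ) ∧
      EB.pos (M.idx m) i ≤ (starDepth Estar i (M.idx m) : ℤ) := by
  have hpos := EB.pos_le_index Estar hdel
  rw [← Estar.starDepth_eq_index hdel] at hpos
  have hdepth := EB.depthB_eq i (M.idx m)
  exact ⟨by omega, hpos⟩
end
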